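/- For a monoid morphism φ: R → S in a monoidal category V with reflexive coequalizers preserved by functors − ⊗ A, the extension of scalars functor φ_*(M) = M ⊗_R S defines an opcartesian lift of φ in the functor Mod(V) → Mon(V); that is, the unit map M → M ⊗_R S over φ is opcartesian. -/

import Mathlib

/-!
A morphism `(M, R) ⟶ (N', T)` over `φ ≫ g` is a map `a : M ⟶ N'` that is linear along `φ ≫ g`.
Linearity makes `(a ⊗ g) ≫ act : M ⊗ S ⟶ N'` coequalize the pair defining `M ⊗_R S`, so it descends
along `π` to `d : N ⟶ N'`. To see that `d` is linear along `g` one compares both sides after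
precomposing with `π ▷ S`, which is an epimorphism because `- ⊗ S` preserves the reflexive
coequalizer `π`. Uniqueness holds because `π` itself factors as `(unit ▷ S) ≫ act`, so a map out of
`N` linear along `g` is determined by its composite with the unit.
-/

open CategoryTheory MonoidalCategory Limits

universe v u

variable {C : Type u} [Category.{v} C] [MonoidalCategory.{v} C]

/-- A right module object over a monoid object in a monoidal category. -/
structure RMod (A : Mon C) : Type max v u where
  X : C
  act : X ⊗ A.X ⟶ X
  one_act : (X ◁ (MonObj.one : 𝟙_ C ⟶ A.X)) ≫ act = (ρ_ X).hom := by aesop_cat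
  assoc : (X ◁ (MonObj.mul : A.X ⊗ A.X ⟶ A.X)) ≫ act = (α_ X A.X A.X).inv ≫ (act ▷ A.X) ≫ act := by aesop_cat

/-- The total category `Mod(V)` of pairs `(R, M)`. -/
structure ModTot (C : Type u) [Category.{v} C] [MonoidalCategory.{v} C] : Type max v u where
  R : Mon C
  M : RMod R

/-- Morphisms in `Mod(V)`. -/
@[ext]
structure ModTotHom (X Y : ModTot C) : Type v where
  φ : X.R ⟶ Y.R
  α : X.M.X ⟶ Y.M.X
  compat : X.M.act ≫ α = (α ⊗ₘ φ.hom) ≫ Y.M.act := by aesop_cat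

instance : Category (ModTot C) where
  Hom X Y := ModTotHom X Y
  id X := { φ := 𝟙 X.R, α := 𝟙 X.M.X, compat := by simp }
  comp {X Y Z} f g :=
    { φ := f.φ ≫ g.φ
      α := f.α ≫ g.α
      compat := by
        rw [Mon.comp_hom', ← tensorHom_comp_tensorHom, Category.assoc, ← g.compat, reassoc_of% f.compat] }
  id_comp f := by apply ModTotHom.ext <;> simp
  comp_id f := by apply ModTotHom.ext <;> simp
  assoc f g h := by apply ModTotHom.ext <;> simp

/-- The forgetful functor `Mod(V) ⥤ Mon(V)`. -/
@[simps]
def modForget (C : Type u) [Category.{v} C] [MonoidalCategory.{v} C] :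
    ModTot C ⥤ Mon C where
  obj X := X.R
  map f := f.φ

open scoped MonObj

lemma modForget_isHomLift_iff {X Y : ModTot C} (g : X.R ⟶ Y.R) (f : X ⟶ Y) :
    (modForget C).IsHomLift g f ↔ f.φ = g := by
  constructor
  · intro hf
    exact (@IsHomLift.eq_of_isHomLift _ _ _ _ (modForget C) X Y g f hf).symm
  · rintro rfl
    exact IsHomLift.map (modForget C) f

lemma modForget_isStronglyCocartesian_of_existsUnique {X Y : ModTot C} (f : X ⟶ Y)
    (huniv : ∀ (Y' : ModTot C) (g : Y.R ⟶ Y'.R) (a : X.M.X ⟶ Y'.M.X),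
      X.M.act ≫ a = (a ⊗ₘ (f.φ ≫ g).hom) ≫ Y'.M.act →
      ∃! d : Y.M.X ⟶ Y'.M.X, Y.M.act ≫ d = (d ⊗ₘ g.hom) ≫ Y'.M.act ∧ f.α ≫ d = a) :
    (modForget C).IsStronglyCocartesian f.φ f where
  toIsHomLift := (modForget_isHomLift_iff _ _).2 rfl
  universal_property' {Y'} g f' hf' := by
    have hφ : f'.φ = f.φ ≫ g := (modForget_isHomLift_iff _ _).1 hf'
    obtain ⟨d, ⟨hd, hfd⟩, huniq⟩ := huniv Y' g f'.α (hφ ▸ f'.compat)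
    refine ⟨⟨g, d, hd⟩, ⟨(modForget_isHomLift_iff _ _).2 rfl, ModTotHom.ext hφ.symm hfd⟩, ?_⟩
    rintro χ ⟨hχ, hfχ⟩
    obtain rfl : χ.φ = g := (modForget_isHomLift_iff (Y := Y') _ _).1 hχ
    exact ModTotHom.ext rfl (huniq χ.α ⟨χ.compat, congrArg ModTotHom.α hfχ⟩)

lemma epi_whiskerRight_of_isColimit {X Y Z : C} {f g : X ⟶ Y} {π : Y ⟶ Z} {h : f ≫ π = g ≫ π}
    (hc : IsColimit (Cofork.ofπ π h)) (A : C) [PreservesColimit (parallelPair f g) (tensorRight A)] :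
    Epi (π ▷ A) :=
  epi_of_isColimit_cofork (isColimitCoforkMapOfIsColimit (tensorRight A) h hc)

namespace RMod

section

variable {T : Mon C} (N : RMod T)

lemma act_whiskerRight_act :
    (N.act ▷ T.X) ≫ N.act = (α_ N.X T.X T.X).hom ≫ (N.X ◁ μ) ≫ N.act := by
  simp [N.assoc]

lemma tensorHom_act_tensorHom_act {X Y Z : C} (a : X ⟶ N.X) (u : Y ⟶ T.X) (v : Z ⟶ T.X) :
    ((a ⊗ₘ u) ≫ N.act ⊗ₘ v) ≫ N.act = (α_ X Y Z).hom ≫ (a ⊗ₘ ((u ⊗ₘ v) ≫ μ)) ≫ N.act := by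
  rw [← Category.comp_id v, ← tensorHom_comp_tensorHom_assoc, tensorHom_id,
    act_whiskerRight_act, associator_naturality_assoc, ← id_tensorHom,
    tensorHom_comp_tensorHom_assoc, Category.comp_id, Category.comp_id]

lemma tensorHom_one_act {X : C} (a : X ⟶ N.X) : (a ⊗ₘ η) ≫ N.act = (ρ_ X).hom ≫ a := by
  rw [MonoidalCategory.tensorHom_def, Category.assoc, N.one_act, rightUnitor_naturality]

end

section ExtendScalars

variable {R S : Mon C} (φ : R ⟶ S) (M : RMod R)

lemma isReflexivePair_extendScalars :
    IsReflexivePair (M.act ▷ S.X) ((α_ M.X R.X S.X).hom ≫ (M.X ◁ (φ.hom ▷ S.X)) ≫ (M.X ◁ μ)) := by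
  refine IsReflexivePair.mk' (((ρ_ M.X).inv ≫ (M.X ◁ η)) ▷ S.X) ?_ ?_
  · rw [← comp_whiskerRight, Category.assoc, M.one_act]
    simp
  · simp [← MonoidalCategory.whiskerLeft_comp, ← comp_whiskerRight_assoc]

lemma tensorHom_act_coequalizes {T : Mon C} (g : S ⟶ T) (N : RMod T) (a : M.X ⟶ N.X)
    (ha : M.act ≫ a = (a ⊗ₘ (φ.hom ≫ g.hom)) ≫ N.act) :
    (M.act ▷ S.X) ≫ (a ⊗ₘ g.hom) ≫ N.act =
      ((α_ M.X R.X S.X).hom ≫ (M.X ◁ (φ.hom ▷ S.X)) ≫ (M.X ◁ μ)) ≫ (a ⊗ₘ g.hom) ≫ N.act := by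
  calc (M.act ▷ S.X) ≫ (a ⊗ₘ g.hom) ≫ N.act = ((M.act ≫ a) ⊗ₘ g.hom) ≫ N.act := by
        rw [← tensorHom_id, tensorHom_comp_tensorHom_assoc, Category.id_comp]
    _ = (α_ _ _ _).hom ≫ (a ⊗ₘ (((φ.hom ≫ g.hom) ⊗ₘ g.hom) ≫ μ)) ≫ N.act := by
        rw [ha, tensorHom_act_tensorHom_act]
    _ = _ := by
        simp only [← id_tensorHom, ← tensorHom_id, Category.assoc, tensorHom_comp_tensorHom_assoc,
          Category.id_comp, IsMonHom.mul_hom g.hom]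

variable {M} {N : RMod S} {π : M.X ⊗ S.X ⟶ N.X}

lemma unit_whiskerRight_act (hact : (α_ M.X S.X S.X).hom ≫ (M.X ◁ μ) ≫ π = (π ▷ S.X) ≫ N.act) :
    (((ρ_ M.X).inv ≫ (M.X ◁ η) ≫ π) ▷ S.X) ≫ N.act = π := by
  simp only [comp_whiskerRight, Category.assoc, ← hact]
  simp [← MonoidalCategory.whiskerLeft_comp_assoc]

lemma unit_comp_eq_of_comp_eq {T : Mon C} {g : S ⟶ T} {N' : RMod T} {a : M.X ⟶ N'.X}
    {d : N.X ⟶ N'.X} (hd : π ≫ d = (a ⊗ₘ g.hom) ≫ N'.act) :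
    ((ρ_ M.X).inv ≫ (M.X ◁ η) ≫ π) ≫ d = a := by
  rw [Category.assoc, Category.assoc, hd, ← id_tensorHom, tensorHom_comp_tensorHom_assoc,
    Category.id_comp, IsMonHom.one_hom, tensorHom_one_act, Iso.inv_hom_id_assoc]

lemma act_comp_eq_of_comp_eq {T : Mon C} {g : S ⟶ T} {N' : RMod T} {a : M.X ⟶ N'.X}
    {d : N.X ⟶ N'.X} (hact : (α_ M.X S.X S.X).hom ≫ (M.X ◁ μ) ≫ π = (π ▷ S.X) ≫ N.act)
    [Epi (π ▷ S.X)] (hd : π ≫ d = (a ⊗ₘ g.hom) ≫ N'.act) :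
    N.act ≫ d = (d ⊗ₘ g.hom) ≫ N'.act := by
  rw [← cancel_epi (π ▷ S.X)]
  calc (π ▷ S.X) ≫ N.act ≫ d = (α_ M.X S.X S.X).hom ≫ (M.X ◁ μ) ≫ (a ⊗ₘ g.hom) ≫ N'.act := by
        rw [← reassoc_of% hact, hd]
    _ = ((a ⊗ₘ g.hom) ≫ N'.act ⊗ₘ g.hom) ≫ N'.act := by
        rw [tensorHom_act_tensorHom_act, ← IsMonHom.mul_hom, ← id_tensorHom,
          tensorHom_comp_tensorHom_assoc, Category.id_comp]
    _ = (π ▷ S.X) ≫ (d ⊗ₘ g.hom) ≫ N'.act := by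
        rw [← hd, ← tensorHom_id, tensorHom_comp_tensorHom_assoc, Category.id_comp]

lemma comp_eq_of_unit_comp_eq {T : Mon C} {g : S ⟶ T} {N' : RMod T} {a : M.X ⟶ N'.X}
    {d : N.X ⟶ N'.X} (hact : (α_ M.X S.X S.X).hom ≫ (M.X ◁ μ) ≫ π = (π ▷ S.X) ≫ N.act)
    (hd : N.act ≫ d = (d ⊗ₘ g.hom) ≫ N'.act) (hud : ((ρ_ M.X).inv ≫ (M.X ◁ η) ≫ π) ≫ d = a) :
    π ≫ d = (a ⊗ₘ g.hom) ≫ N'.act := by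
  rw [← unit_whiskerRight_act hact, Category.assoc, hd, ← tensorHom_id,
    tensorHom_comp_tensorHom_assoc, Category.id_comp, hud]

end ExtendScalars

end RMod

theorem statement2_general (C : Type u) [Category.{v} C] [MonoidalCategory.{v} C]
    (hpres : ∀ (A : C) ⦃X Y : C⦄ (f g : X ⟶ Y) [IsReflexivePair f g],
      PreservesColimit (parallelPair f g) (tensorRight A))
    {R S : Mon C} (φ : R ⟶ S) (M : RMod R) (N : RMod S)
    (π : M.X ⊗ S.X ⟶ N.X)
    (h : (M.act ▷ S.X) ≫ π =
      ((α_ M.X R.X S.X).hom ≫ (M.X ◁ (φ.hom ▷ S.X)) ≫ (M.X ◁ (MonObj.mul : S.X ⊗ S.X ⟶ S.X))) ≫ π)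
    (hcolim : Nonempty (IsColimit (Cofork.ofπ π h)))
    (hact : (α_ M.X S.X S.X).hom ≫ (M.X ◁ (MonObj.mul : S.X ⊗ S.X ⟶ S.X)) ≫ π = (π ▷ S.X) ≫ N.act)
    (hcompat : M.act ≫ ((ρ_ M.X).inv ≫ (M.X ◁ (MonObj.one : 𝟙_ C ⟶ S.X)) ≫ π) =
      (((ρ_ M.X).inv ≫ (M.X ◁ (MonObj.one : 𝟙_ C ⟶ S.X)) ≫ π) ⊗ₘ φ.hom) ≫ N.act) :
    (modForget C).IsStronglyCocartesian φ
      (({ φ := φ, α := (ρ_ M.X).inv ≫ (M.X ◁ (MonObj.one : 𝟙_ C ⟶ S.X)) ≫ π, compat := hcompat } :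
        ({ R := R, M := M } : ModTot C) ⟶ { R := S, M := N })) := by
  obtain ⟨hc⟩ := hcolim
  have := RMod.isReflexivePair_extendScalars φ M
  have := hpres S.X (M.act ▷ S.X) ((α_ M.X R.X S.X).hom ≫ (M.X ◁ (φ.hom ▷ S.X)) ≫ (M.X ◁ μ))
  have := epi_whiskerRight_of_isColimit hc S.X
  refine modForget_isStronglyCocartesian_of_existsUnique (X := ⟨R, M⟩) (Y := ⟨S, N⟩)
    ⟨φ, _, hcompat⟩ fun N' g a ha => ?_
  rw [Mon.comp_hom'] at ha
  obtain ⟨d, hπd⟩ := Cofork.IsColimit.desc' hc _ (M.tensorHom_act_coequalizes φ g N'.M a ha)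
  refine ⟨d, ⟨RMod.act_comp_eq_of_comp_eq hact hπd, RMod.unit_comp_eq_of_comp_eq hπd⟩, ?_⟩
  rintro d' ⟨hd', hud'⟩
  exact Cofork.IsColimit.hom_ext hc ((RMod.comp_eq_of_unit_comp_eq hact hd' hud').trans hπd.symm)

/-- let `V` have reflexive coequalizers, preserved by `- ⊗ A` for every `A`.
Let `φ : R ⟶ S` be a monoid morphism and `M` a right `R`-module. Suppose `N` is a right
`S`-module realizing the extension of scalars `M ⊗_R S`: its underlying object is equipped
with a map `π : M ⊗ S ⟶ N` coequalizing the two canonical maps `(M ⊗ R) ⊗ S ⇉ M ⊗ S`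
(action of `R` on `M` versus multiplication of `S` via `φ`), which is a (reflexive)
coequalizer, and through which the `S`-action on `M ⊗ S` descends to the action of `N`.
Then the unit map `M ⟶ M ⊗_R S` (i.e. `(M, R) ⟶ (N, S)` in `Mod(V)`, with components `φ`
and `M ≅ M ⊗ I ⟶ M ⊗ S ⟶ N`) is (strongly) opcartesian over `φ`. -/
theorem statement2 (C : Type u) [Category.{v} C] [MonoidalCategory.{v} C]
    [HasReflexiveCoequalizers C]
    (hpres : ∀ (A : C) ⦃X Y : C⦄ (f g : X ⟶ Y) [IsReflexivePair f g],
      PreservesColimit (parallelPair f g) (tensorRight A))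
    {R S : Mon C} (φ : R ⟶ S) (M : RMod R) (N : RMod S)
    (π : M.X ⊗ S.X ⟶ N.X)
    (h : (M.act ▷ S.X) ≫ π =
      ((α_ M.X R.X S.X).hom ≫ (M.X ◁ (φ.hom ▷ S.X)) ≫ (M.X ◁ (MonObj.mul : S.X ⊗ S.X ⟶ S.X))) ≫ π)
    (hcolim : Nonempty (IsColimit (Cofork.ofπ π h)))
    (hact : (α_ M.X S.X S.X).hom ≫ (M.X ◁ (MonObj.mul : S.X ⊗ S.X ⟶ S.X)) ≫ π = (π ▷ S.X) ≫ N.act)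
    (hcompat : M.act ≫ ((ρ_ M.X).inv ≫ (M.X ◁ (MonObj.one : 𝟙_ C ⟶ S.X)) ≫ π) =
      (((ρ_ M.X).inv ≫ (M.X ◁ (MonObj.one : 𝟙_ C ⟶ S.X)) ≫ π) ⊗ₘ φ.hom) ≫ N.act) :
    (modForget C).IsStronglyCocartesian φ
      (({ φ := φ, α := (ρ_ M.X).inv ≫ (M.X ◁ (MonObj.one : 𝟙_ C ⟶ S.X)) ≫ π, compat := hcompat } :
        ({ R := R, M := M } : ModTot C) ⟶ { R := S, M := N })) :=
  statement2_general C hpres φ M N π h hcolim hact hcompat
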